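/- arXiv:2507.14589 — 7 statements merged into one kernel-verified Lean document; each statement's English description precedes it below -/
import Mathlib

section
/- If a, x₁ ∈ ℂ satisfy |a|² + |x₁|² ≤ 1, then there exists x₃ ∈ ℂ with |x₃| = 1 such that (a, x₁, x₁, x₃) belongs to the closed hexablock ℍ̄. -/
/-!
Write `x₁ = r ω` with `r = |x₁|`, `|ω| = 1`, and take `x₃ = ω²`. Then `x₁ = conj(x₁) x₃`, which
turns the tetrablock inequality into an equality. After the rotation `wᵢ = ω zᵢ` the hexablock
function is `1 - r w₁ - r w₂ + w₁ w₂ = (1 - r w₁) - w₂ (r - w₁)`, and with `A = |1 - r w₁|`,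
`B = |r - w₁|` we have `A² - B² = (1 - r²)(1 - |w₁|²)`. Hence, with `v = |w₂|`,
`|a| √((1 - |w₁|²)(1 - v²)) ≤ √((A² - B²)(1 - v²)) ≤ A - v B ≤ |(1 - r w₁) - w₂ (r - w₁)|`,
the middle step being `(B - v A)² ≥ 0`.
-/

open Complex

noncomputable section

/-- The closed tetrablock `𝔼̄ ⊆ ℂ³`. -/
def closedTetrablock : Set (ℂ × ℂ × ℂ) :=
  {x | ‖x.1‖ ≤ 1 ∧
    0 ≤ 1 + ‖x.1‖ ^ 2 - ‖x.2.1‖ ^ 2 - ‖x.2.2‖ ^ 2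
      - 2 * ‖x.1 - (starRingEnd ℂ) x.2.1 * x.2.2‖}

/-- The closed hexablock `ℍ̄ ⊆ ℂ⁴`. -/
def closedHexablock : Set (ℂ × ℂ × ℂ × ℂ) :=
  {w | (w.2.1, w.2.2.1, w.2.2.2) ∈ closedTetrablock ∧
    ∀ z₁ z₂ : ℂ, ‖z₁‖ < 1 → ‖z₂‖ < 1 →
      ‖w.1‖ * Real.sqrt ((1 - ‖z₁‖ ^ 2) * (1 - ‖z₂‖ ^ 2)) ≤
        ‖1 - w.2.1 * z₁ - w.2.2.1 * z₂ + w.2.2.2 * z₁ * z₂‖}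

open ComplexConjugate

lemma Complex.exists_norm_eq_one_and_eq_norm_mul (x : ℂ) :
    ∃ ω : ℂ, ‖ω‖ = 1 ∧ x = ‖x‖ * ω :=
  ⟨exp (x.arg * I), norm_exp_ofReal_mul_I _, (norm_mul_exp_arg_mul_I x).symm⟩

lemma Complex.sq_norm_one_sub_conj_mul_sub_sq_norm_sub (a w : ℂ) :
    ‖1 - conj a * w‖ ^ 2 - ‖a - w‖ ^ 2 = (1 - ‖a‖ ^ 2) * (1 - ‖w‖ ^ 2) := by
  simp only [Complex.sq_norm, normSq_apply, sub_re, sub_im, mul_re, mul_im, conj_re, conj_im,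
    one_re, one_im]
  ring

lemma Real.sqrt_sub_sq_mul_one_sub_sq_le {A B v : ℝ} (hBA : |B| ≤ A) (hv : |v| ≤ 1) :
    √((A ^ 2 - B ^ 2) * (1 - v ^ 2)) ≤ A - v * B := by
  have hvB : v * B ≤ A := by
    calc v * B ≤ |v * B| := le_abs_self _
      _ = |v| * |B| := abs_mul v B
      _ ≤ 1 * A := by gcongr
      _ = A := one_mul A
  rw [Real.sqrt_le_left (by linarith)]
  nlinarith [sq_nonneg (B - v * A)]

lemma mem_closedTetrablock_ofReal_mul {r : ℝ} (hr : |r| ≤ 1) {ω : ℂ} (hω : ‖ω‖ = 1) :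
    ((r : ℂ) * ω, (r : ℂ) * ω, ω ^ 2) ∈ closedTetrablock := by
  have hconj : conj ω * ω = 1 := by rw [conj_mul', hω]; norm_num
  have hzero : (r : ℂ) * ω - conj ((r : ℂ) * ω) * ω ^ 2 = 0 := by
    rw [map_mul, conj_ofReal]
    linear_combination (-(r : ℂ) * ω) * hconj
  refine ⟨by simpa [hω] using hr, ?_⟩
  simp only [hzero, norm_mul, norm_pow, norm_zero, hω]
  norm_num

lemma norm_mul_sqrt_le_norm_one_sub_ofReal_mul_add_mul {a : ℂ} {r : ℝ}
    (h : ‖a‖ ^ 2 + r ^ 2 ≤ 1) {w₁ w₂ : ℂ} (hw₁ : ‖w₁‖ ≤ 1) (hw₂ : ‖w₂‖ ≤ 1) :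
    ‖a‖ * √((1 - ‖w₁‖ ^ 2) * (1 - ‖w₂‖ ^ 2)) ≤ ‖1 - r * w₁ - r * w₂ + w₁ * w₂‖ := by
  set A := ‖1 - r * w₁‖
  set B := ‖(r : ℂ) - w₁‖
  have hAB : A ^ 2 - B ^ 2 = (1 - r ^ 2) * (1 - ‖w₁‖ ^ 2) := by
    simpa [norm_real] using sq_norm_one_sub_conj_mul_sub_sq_norm_sub (r : ℂ) w₁
  have hw₁_sq : 0 ≤ 1 - ‖w₁‖ ^ 2 := by nlinarith [norm_nonneg w₁]
  have hw₂_sq : 0 ≤ 1 - ‖w₂‖ ^ 2 := by nlinarith [norm_nonneg w₂]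
  have hBA : |B| ≤ A := abs_le_of_sq_le_sq (by nlinarith) (norm_nonneg _)
  calc ‖a‖ * √((1 - ‖w₁‖ ^ 2) * (1 - ‖w₂‖ ^ 2))
      = √(‖a‖ ^ 2 * (1 - ‖w₁‖ ^ 2) * (1 - ‖w₂‖ ^ 2)) := by
        rw [mul_assoc, Real.sqrt_mul (sq_nonneg _), Real.sqrt_sq (norm_nonneg a)]
    _ ≤ √((1 - r ^ 2) * (1 - ‖w₁‖ ^ 2) * (1 - ‖w₂‖ ^ 2)) := by gcongr; linarith
    _ ≤ A - ‖w₂‖ * B := by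
        rw [← hAB]
        exact Real.sqrt_sub_sq_mul_one_sub_sq_le hBA (by rwa [abs_norm])
    _ = ‖1 - r * w₁‖ - ‖w₂ * (r - w₁)‖ := by rw [norm_mul]
    _ ≤ ‖1 - r * w₁ - w₂ * (r - w₁)‖ := norm_sub_norm_le _ _
    _ = ‖1 - r * w₁ - r * w₂ + w₁ * w₂‖ := by congr 1; ring

/-- If `|a|² + |x₁|² ≤ 1`, then there is `x₃` with `|x₃| = 1` such that
`(a, x₁, x₁, x₃)` belongs to the closed hexablock. -/
theorem point_in_closed_hexablock_of_ball
    (a x₁ : ℂ) (h : ‖a‖ ^ 2 + ‖x₁‖ ^ 2 ≤ 1) :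
    ∃ x₃ : ℂ, ‖x₃‖ = 1 ∧ (a, x₁, x₁, x₃) ∈ closedHexablock := by
  obtain ⟨ω, hω, hx⟩ := x₁.exists_norm_eq_one_and_eq_norm_mul
  have hx₁ : |‖x₁‖| ≤ 1 := by
    rw [abs_norm]; nlinarith [norm_nonneg a, norm_nonneg x₁]
  refine ⟨ω ^ 2, by simp [hω], ?_, fun z₁ z₂ hz₁ hz₂ => ?_⟩
  · rw [hx]
    exact mem_closedTetrablock_ofReal_mul hx₁ hω
  · have hbound := norm_mul_sqrt_le_norm_one_sub_ofReal_mul_add_mul h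
      (w₁ := ω * z₁) (w₂ := ω * z₂) (by simpa [hω] using hz₁.le) (by simpa [hω] using hz₂.le)
    simp only [norm_mul, hω, one_mul] at hbound
    rw [hx]
    convert hbound using 2
    ring
end
end

section
/- If a, x₁, x₂ ∈ ℂ satisfy |a|² + |x₁|² ≤ 1 and |a|² + |x₂|² ≤ 1, then there exists x₃ ∈ ℂ with |x₃| ≤ 1 such that (a, x₁, x₂, x₃) belongs to the closed hexablock ℍ̄. -/
open Complex

noncomputable section

/-!
For `|a| = 1` both `x₁` and `x₂` vanish and `x₃ = 0` works. Otherwise put `B = 1 - |a|²`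
and `x₃ = x₁x₂/B`. With `w = x₂z₂` the hexablock polynomial factors as
`(1 - w) - z₁ · x₁(B - w)/B`, so its modulus is at least `X - |z₁|·T` with `X = |1 - w|` and
`T = |x₁||B - w|/B`. The identity `B|1 - w|² - |B - w|² = (1 - B)(B - |w|²)` together with
`|x₁|² ≤ B` and `|w|² ≤ B|z₂|²` gives `|a|²(1 - |z₂|²) + T² ≤ X²`, and Cauchy–Schwarz in `ℝ²`
turns this into `|a|√(1 - |z₁|²)√(1 - |z₂|²) + |z₁|·T ≤ X`.
-/

theorem Real.sqrt_one_sub_sq_mul_add_mul_le {t C T X : ℝ} (ht : t ^ 2 ≤ 1) (hX : 0 ≤ X)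
    (h : C ^ 2 + T ^ 2 ≤ X ^ 2) : √(1 - t ^ 2) * C + t * T ≤ X := by
  have hs : √(1 - t ^ 2) ^ 2 = 1 - t ^ 2 := Real.sq_sqrt (by linarith)
  refine (abs_le_of_sq_le_sq' ?_ hX).2
  nlinarith [sq_nonneg (√(1 - t ^ 2) * T - t * C)]

theorem Complex.mul_norm_one_sub_sq_sub_norm_sub_sq (B : ℝ) (w : ℂ) :
    B * ‖1 - w‖ ^ 2 - ‖(B : ℂ) - w‖ ^ 2 = (1 - B) * (B - ‖w‖ ^ 2) := by
  simp only [Complex.sq_norm, Complex.normSq_apply, Complex.sub_re, Complex.sub_im,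
    Complex.one_re, Complex.one_im, Complex.ofReal_re, Complex.ofReal_im]
  ring

theorem Complex.one_sub_mul_add_div_sq_le_norm_one_sub_sq {w : ℂ} {B r u : ℝ} (hB : 0 < B)
    (hB1 : B ≤ 1) (hr : r ^ 2 ≤ B) (hw : ‖w‖ ^ 2 ≤ B * u ^ 2) :
    (1 - B) * (1 - u ^ 2) + (r * ‖(B : ℂ) - w‖ / B) ^ 2 ≤ ‖1 - w‖ ^ 2 := by
  have hid := mul_norm_one_sub_sq_sub_norm_sub_sq B w
  have hr' : r ^ 2 * ‖(B : ℂ) - w‖ ^ 2 ≤ B * ‖(B : ℂ) - w‖ ^ 2 := by gcongr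
  have hw' : (1 - B) * (B * (B * (1 - u ^ 2))) ≤ (1 - B) * (B * (B - ‖w‖ ^ 2)) := by
    gcongr; linarith
  have hcleared :
      (1 - B) * (1 - u ^ 2) * B ^ 2 + r ^ 2 * ‖(B : ℂ) - w‖ ^ 2 ≤ ‖1 - w‖ ^ 2 * B ^ 2 := by
    nlinarith
  calc (1 - B) * (1 - u ^ 2) + (r * ‖(B : ℂ) - w‖ / B) ^ 2
      = ((1 - B) * (1 - u ^ 2) * B ^ 2 + r ^ 2 * ‖(B : ℂ) - w‖ ^ 2) / B ^ 2 := by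
        field_simp
    _ ≤ ‖1 - w‖ ^ 2 := (div_le_iff₀ (by positivity)).2 hcleared

theorem Complex.sqrt_mul_sqrt_le_norm_one_sub_add_mul_div {x₁ x₂ z₁ z₂ : ℂ} {B : ℝ} (hB : 0 < B)
    (hB1 : B ≤ 1) (h₁ : ‖x₁‖ ^ 2 ≤ B) (h₂ : ‖x₂‖ ^ 2 ≤ B) (hz₁ : ‖z₁‖ ≤ 1) (hz₂ : ‖z₂‖ ≤ 1) :
    √(1 - B) * √((1 - ‖z₁‖ ^ 2) * (1 - ‖z₂‖ ^ 2)) ≤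
      ‖1 - x₁ * z₁ - x₂ * z₂ + x₁ * x₂ / B * z₁ * z₂‖ := by
  set w := x₂ * z₂
  set T := ‖x₁‖ * ‖(B : ℂ) - w‖ / B
  have hB' : (B : ℂ) ≠ 0 := ofReal_ne_zero.2 hB.ne'
  have hsplit : 1 - x₁ * z₁ - x₂ * z₂ + x₁ * x₂ / B * z₁ * z₂
      = (1 - w) - z₁ * (x₁ * (B - w) / B) := by
    field_simp
    ring
  have hnorm : ‖z₁ * (x₁ * (B - w) / B)‖ = ‖z₁‖ * T := by
    rw [norm_mul, norm_div, norm_mul, norm_real, Real.norm_of_nonneg hB.le]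
  have hw : ‖w‖ ^ 2 ≤ B * ‖z₂‖ ^ 2 := by
    rw [norm_mul, mul_pow]
    gcongr
  have hz₁' : ‖z₁‖ ^ 2 ≤ 1 := pow_le_one₀ (norm_nonneg _) hz₁
  have hz₂' : ‖z₂‖ ^ 2 ≤ 1 := pow_le_one₀ (norm_nonneg _) hz₂
  have hkey : (√(1 - B) * √(1 - ‖z₂‖ ^ 2)) ^ 2 + T ^ 2 ≤ ‖1 - w‖ ^ 2 := by
    rw [mul_pow, Real.sq_sqrt (by linarith), Real.sq_sqrt (by linarith)]
    exact one_sub_mul_add_div_sq_le_norm_one_sub_sq hB hB1 h₁ hw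
  have hcs := Real.sqrt_one_sub_sq_mul_add_mul_le hz₁' (norm_nonneg _) hkey
  calc √(1 - B) * √((1 - ‖z₁‖ ^ 2) * (1 - ‖z₂‖ ^ 2))
      = √(1 - ‖z₁‖ ^ 2) * (√(1 - B) * √(1 - ‖z₂‖ ^ 2)) := by
        rw [Real.sqrt_mul (by linarith)]
        ring
    _ ≤ ‖1 - w‖ - ‖z₁‖ * T := by linarith
    _ ≤ _ := by
        rw [hsplit, ← hnorm]
        exact norm_sub_norm_le _ _

theorem mul_div_mem_closedTetrablock {x₁ x₂ : ℂ} {B : ℝ} (hB : 0 < B) (hB1 : B ≤ 1)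
    (h₁ : ‖x₁‖ ^ 2 ≤ B) (h₂ : ‖x₂‖ ^ 2 ≤ B) : (x₁, x₂, x₁ * x₂ / B) ∈ closedTetrablock := by
  have hB' : (B : ℂ) ≠ 0 := ofReal_ne_zero.2 hB.ne'
  have hx₃ : ‖x₁ * x₂ / B‖ = ‖x₁‖ * ‖x₂‖ / B := by
    rw [norm_div, norm_mul, norm_real, Real.norm_of_nonneg hB.le]
  have hdiff : x₁ - (starRingEnd ℂ) x₂ * (x₁ * x₂ / B) = (((B - ‖x₂‖ ^ 2) / B : ℝ) : ℂ) * x₁ := by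
    have hconj := conj_mul' x₂
    push_cast
    field_simp
    linear_combination (-x₁) * hconj
  have hdiff_norm : ‖x₁ - (starRingEnd ℂ) x₂ * (x₁ * x₂ / B)‖ = (B - ‖x₂‖ ^ 2) / B * ‖x₁‖ := by
    rw [hdiff, norm_mul, norm_real, Real.norm_of_nonneg (div_nonneg (by linarith) hB.le)]
  refine ⟨by nlinarith [norm_nonneg x₁], ?_⟩
  simp only [hx₃, hdiff_norm]
  have hdefect : 1 + ‖x₁‖ ^ 2 - ‖x₂‖ ^ 2 - (‖x₁‖ * ‖x₂‖ / B) ^ 2 - 2 * ((B - ‖x₂‖ ^ 2) / B * ‖x₁‖)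
      = ((B - ‖x₂‖ ^ 2) * (B - ‖x₁‖) ^ 2 + B * (1 - B) * (B - ‖x₁‖ ^ 2)) / B ^ 2 := by
    field_simp
    ring
  rw [hdefect]
  have hleft : 0 ≤ (B - ‖x₂‖ ^ 2) * (B - ‖x₁‖) ^ 2 := mul_nonneg (by linarith) (sq_nonneg _)
  have hright : 0 ≤ B * (1 - B) * (B - ‖x₁‖ ^ 2) := by
    apply mul_nonneg (mul_nonneg hB.le _) <;> linarith
  positivity

theorem mk_zero_zero_zero_mem_closedHexablock {a : ℂ} (ha : ‖a‖ ≤ 1) :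
    (a, 0, 0, 0) ∈ closedHexablock := by
  refine ⟨by simp [closedTetrablock], fun z₁ z₂ hz₁ hz₂ => ?_⟩
  simp only [zero_mul, sub_zero, add_zero, norm_one]
  have hz₁' : 0 ≤ 1 - ‖z₁‖ ^ 2 := by nlinarith [norm_nonneg z₁]
  have hz₂' : 0 ≤ 1 - ‖z₂‖ ^ 2 := by nlinarith [norm_nonneg z₂]
  refine mul_le_one₀ ha (Real.sqrt_nonneg _) (Real.sqrt_le_one.2 (mul_le_one₀ ?_ hz₂' ?_)) <;>
    nlinarith [sq_nonneg ‖z₁‖, sq_nonneg ‖z₂‖]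

/-- If `|a|² + |x₁|² ≤ 1` and `|a|² + |x₂|² ≤ 1`, then there is `x₃` with `|x₃| ≤ 1`
such that `(a, x₁, x₂, x₃)` belongs to the closed hexablock. -/
theorem point_in_closed_hexablock_of_two_balls
    (a x₁ x₂ : ℂ) (h₁ : ‖a‖ ^ 2 + ‖x₁‖ ^ 2 ≤ 1)
    (h₂ : ‖a‖ ^ 2 + ‖x₂‖ ^ 2 ≤ 1) :
    ∃ x₃ : ℂ, ‖x₃‖ ≤ 1 ∧ (a, x₁, x₂, x₃) ∈ closedHexablock := by
  have ha : ‖a‖ ≤ 1 := by nlinarith [norm_nonneg x₁, norm_nonneg a]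
  rcases ha.eq_or_lt with ha | ha
  · have hx₁ : x₁ = 0 := by rw [← norm_eq_zero]; nlinarith [norm_nonneg x₁]
    have hx₂ : x₂ = 0 := by rw [← norm_eq_zero]; nlinarith [norm_nonneg x₂]
    subst hx₁ hx₂
    exact ⟨0, by simp, mk_zero_zero_zero_mem_closedHexablock ha.le⟩
  set B := 1 - ‖a‖ ^ 2
  have hB : 0 < B := by nlinarith [norm_nonneg a]
  have hB1 : B ≤ 1 := by nlinarith [norm_nonneg a]
  have ha' : ‖a‖ = √(1 - B) := by simp [B, Real.sqrt_sq (norm_nonneg a)]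
  refine ⟨x₁ * x₂ / B, ?_, mul_div_mem_closedTetrablock hB hB1 (by linarith) (by linarith),
    fun z₁ z₂ hz₁ hz₂ => ?_⟩
  · rw [norm_div, norm_mul, norm_real, Real.norm_of_nonneg hB.le, div_le_one hB]
    nlinarith [sq_nonneg (‖x₁‖ - ‖x₂‖)]
  · rw [ha']
    exact sqrt_mul_sqrt_le_norm_one_sub_add_mul_div hB hB1 (by linarith) (by linarith) hz₁.le hz₂.le
end
end

section
/- For every real r with 0 < r < 1/2, set a = (3(1 − r²) + √(1 + r⁴))/4 and (x₁, x₂, x₃) = (r, i·r, i·r²). Then: (i) a² + r² < 1, so (a, x₁) and (a, x₂) lie in 𝔹̄₂; (ii) (x₁, x₂, x₃) belongs to the closed tetrablock 𝔼̄; (iii) a ≤ (√(1 + r⁴) + (1 − r²))/2, and (a, x₁ + x₂, x₃) belongs to the closed pentablock ℙ̄; (iv) a > 1 − r², and taking z₁ = r, z₂ = −i·r one has a·√((1−r²)·(1−r²)) > |1 − x₁·z₁ − x₂·z₂ + x₃·z₁·z₂| = (1−r²)², so (a, x₁, x₂, x₃) does not belong to the closed hexablock ℍ̄. -/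
/-! The pentablock witness is `B = [[(1 + i) r / 2, -i r² / (2a)], [a, (1 + i) r / 2]]`, which has
`B₂₁ = a`, trace `r + i r` and determinant `i r²`. Its operator norm is bounded by that of the real
matrix of the moduli of its entries, which is a contraction exactly when
`(2a² - (1 - r²))² ≤ 1 - 2r²`; for the given `a` this follows from `√(1 + r⁴) ≤ 1 + r⁴ / 2`.
Non-membership in the hexablock is detected at `(z₁, z₂) = (r, -i r)`: there the defining
polynomial equals `(1 - r²)²`, while `a (1 - r²)` is larger because `a > 1 - r²`. -/

open Complex

noncomputable section

/-- The closed Euclidean unit ball `𝔹̄₂ ⊆ ℂ²`. -/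
def closedBiball : Set (ℂ × ℂ) :=
  {z | ‖z.1‖ ^ 2 + ‖z.2‖ ^ 2 ≤ 1}

/-- The closed pentablock `ℙ̄ ⊆ ℂ³`. -/
def closedPentablock : Set (ℂ × ℂ × ℂ) :=
  {w | ∃ b : Matrix (Fin 2) (Fin 2) ℂ, ‖Matrix.toEuclideanCLM (𝕜 := ℂ) b‖ ≤ 1 ∧
    w = (b 1 0, b 0 0 + b 1 1, b 0 0 * b 1 1 - b 0 1 * b 1 0)}

theorem Matrix.norm_toEuclideanCLM_le_one_of_norm_entries {𝕜 n : Type*} [RCLike 𝕜] [Fintype n]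
    [DecidableEq n] (M : Matrix n n 𝕜)
    (h : ∀ p : n → ℝ, (∀ j, 0 ≤ p j) → ∑ i, (∑ j, ‖M i j‖ * p j) ^ 2 ≤ ∑ j, p j ^ 2) :
    ‖Matrix.toEuclideanCLM (𝕜 := 𝕜) M‖ ≤ 1 := by
  refine ContinuousLinearMap.opNorm_le_bound _ zero_le_one fun x => ?_
  rw [one_mul]
  refine le_of_sq_le_sq ?_ (norm_nonneg x)
  have hentry (i : n) : ‖Matrix.toEuclideanCLM (𝕜 := 𝕜) M x i‖ ≤ ∑ j, ‖M i j‖ * ‖x j‖ := by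
    have happly : Matrix.toEuclideanCLM (𝕜 := 𝕜) M x i = ∑ j, M i j * x j := rfl
    rw [happly]
    exact (norm_sum_le _ _).trans_eq (by simp only [norm_mul])
  calc ‖Matrix.toEuclideanCLM (𝕜 := 𝕜) M x‖ ^ 2
      = ∑ i, ‖Matrix.toEuclideanCLM (𝕜 := 𝕜) M x i‖ ^ 2 := EuclideanSpace.norm_sq_eq _
    _ ≤ ∑ i, (∑ j, ‖M i j‖ * ‖x j‖) ^ 2 :=
        Finset.sum_le_sum fun i _ => pow_le_pow_left₀ (norm_nonneg _) (hentry i) 2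
    _ ≤ ∑ j, ‖x j‖ ^ 2 := h _ fun j => norm_nonneg _
    _ = ‖x‖ ^ 2 := (EuclideanSpace.norm_sq_eq x).symm

theorem quadratic_form_nonneg {A B C : ℝ} (hA : 0 < A) (hdisc : B ^ 2 ≤ A * C) (p q : ℝ) :
    0 ≤ A * p ^ 2 + 2 * B * p * q + C * q ^ 2 := by
  have : 0 ≤ A * (A * p ^ 2 + 2 * B * p * q + C * q ^ 2) := by
    nlinarith [sq_nonneg (A * p + B * q), mul_nonneg (sub_nonneg.2 hdisc) (sq_nonneg q)]
  exact nonneg_of_mul_nonneg_right (by linarith) hA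

section Witness

variable {a r : ℝ}

theorem sq_add_sq_lt_one_of_sq_sub_le (hr : r ≠ 0)
    (h : (2 * a ^ 2 - (1 - r ^ 2)) ^ 2 ≤ 1 - 2 * r ^ 2) : a ^ 2 + r ^ 2 < 1 := by
  have hr2 : 0 < r ^ 2 := by positivity
  by_contra! hge
  nlinarith [mul_le_mul hge hge (by linarith) (by linarith)]

def pentablockWitness (a r : ℝ) : Matrix (Fin 2) (Fin 2) ℂ :=
  !![(1 + I) * r / 2, -(I * r ^ 2) / (2 * a); a, (1 + I) * r / 2]

theorem pentablockWitness_coords (ha : a ≠ 0) :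
    (pentablockWitness a r 1 0, pentablockWitness a r 0 0 + pentablockWitness a r 1 1,
      pentablockWitness a r 0 0 * pentablockWitness a r 1 1
        - pentablockWitness a r 0 1 * pentablockWitness a r 1 0) =
      ((a : ℂ), (r : ℂ) + I * r, I * r ^ 2) := by
  have ha' : (a : ℂ) ≠ 0 := Complex.ofReal_ne_zero.2 ha
  simp only [pentablockWitness, Matrix.of_apply, Matrix.cons_val', Matrix.cons_val_zero,
    Matrix.cons_val_one, Matrix.empty_val', Matrix.cons_val_fin_one, Prod.mk.injEq]
  refine ⟨trivial, by ring, ?_⟩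
  field_simp
  linear_combination (r : ℂ) ^ 2 * Complex.I_sq

theorem norm_pentablockWitness_le_one (ha : 0 < a) (hr : r ≠ 0)
    (h : (2 * a ^ 2 - (1 - r ^ 2)) ^ 2 ≤ 1 - 2 * r ^ 2) :
    ‖Matrix.toEuclideanCLM (𝕜 := ℂ) (pentablockWitness a r)‖ ≤ 1 := by
  set ρ := ‖(1 + I) * (r : ℂ) / 2‖
  set ν := ‖-(I * (r : ℂ) ^ 2) / (2 * a)‖
  have hρ : ρ ^ 2 = r ^ 2 / 2 := by
    simp only [ρ, Complex.sq_norm, Complex.normSq_div, Complex.normSq_mul]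
    simp [Complex.normSq_apply]
    ring
  have hν : 2 * a * ν = r ^ 2 := by
    simp only [ν, norm_div, norm_neg, norm_mul, norm_pow, Complex.norm_I, Complex.norm_real,
      Real.norm_eq_abs, abs_of_pos ha, sq_abs]
    field_simp
    norm_num
  have hA : 0 < 1 - ρ ^ 2 - a ^ 2 := by
    nlinarith [sq_add_sq_lt_one_of_sq_sub_le hr h]
  have hdisc : (ρ * (a + ν)) ^ 2 ≤ (1 - ρ ^ 2 - a ^ 2) * (1 - ρ ^ 2 - ν ^ 2) := by
    have hν2 : 4 * a ^ 2 * ν ^ 2 = r ^ 4 := by linear_combination (2 * a * ν + r ^ 2) * hν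
    have hid : 4 * a ^ 2 * ((1 - ρ ^ 2 - a ^ 2) * (1 - ρ ^ 2 - ν ^ 2) - (ρ * (a + ν)) ^ 2) =
        1 - 2 * r ^ 2 - (2 * a ^ 2 - (1 - r ^ 2)) ^ 2 := by
      rw [mul_pow, hρ]
      linear_combination (a ^ 2 - 1) * hν2 - 2 * a ^ 2 * r ^ 2 * hν
    refine sub_nonneg.1 (nonneg_of_mul_nonneg_right ?_ (by positivity : (0 : ℝ) < 4 * a ^ 2))
    rw [hid]
    linarith
  refine Matrix.norm_toEuclideanCLM_le_one_of_norm_entries _ fun p _ => ?_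
  have := quadratic_form_nonneg hA hdisc (p 0) (-p 1)
  simp only [Fin.sum_univ_two, pentablockWitness, Matrix.of_apply, Matrix.cons_val',
    Matrix.cons_val_zero, Matrix.cons_val_one, Matrix.empty_val', Matrix.cons_val_fin_one,
    Complex.norm_real, Real.norm_eq_abs, abs_of_pos ha]
  linear_combination this

end Witness

theorem sq_sub_le_of_eq_sqrt {r a : ℝ} (hr0 : 0 < r) (hr : r < 1 / 2)
    (ha : a = (3 * (1 - r ^ 2) + √(1 + r ^ 4)) / 4) :
    (2 * a ^ 2 - (1 - r ^ 2)) ^ 2 ≤ 1 - 2 * r ^ 2 := by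
  set t := r ^ 2
  have ht0 : 0 < t := by positivity
  have ht1 : t < 1 / 4 := by nlinarith
  have hs : √(1 + t ^ 2) ≤ 1 + t ^ 2 / 2 :=
    Real.sqrt_le_iff.2 ⟨by positivity, by nlinarith [sq_nonneg t]⟩
  have hs1 : 1 ≤ √(1 + t ^ 2) := Real.one_le_sqrt.2 (by nlinarith)
  rw [show r ^ 4 = t ^ 2 by ring] at ha
  have ha_le : a ≤ 1 - 3 * t / 4 + t ^ 2 / 8 := by rw [ha]; linarith
  have ha_ge : 13 / 16 ≤ a := by rw [ha]; linarith
  have hX_nonneg : 0 ≤ 2 * a ^ 2 - (1 - t) := by nlinarith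
  have hX_le : 2 * a ^ 2 - (1 - t) ≤ 1 - t - t ^ 2 := by
    have hpoly : 2 * (1 - 3 * t / 4 + t ^ 2 / 8) ^ 2 - (1 - t) ≤ 1 - t - t ^ 2 := by
      nlinarith [mul_pos ht0 ht0, mul_pos (mul_pos ht0 ht0) ht0]
    nlinarith [pow_le_pow_left₀ (by linarith) ha_le 2]
  calc (2 * a ^ 2 - (1 - t)) ^ 2 ≤ (1 - t - t ^ 2) ^ 2 := pow_le_pow_left₀ hX_nonneg hX_le 2
    _ ≤ 1 - 2 * t := by nlinarith [mul_pos ht0 ht0, mul_pos (mul_pos ht0 ht0) ht0]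

theorem mem_closedTetrablock_of_le_one {r : ℝ} (hr0 : 0 ≤ r) (hr1 : r ≤ 1) :
    ((r : ℂ), I * r, I * r ^ 2) ∈ closedTetrablock := by
  have hdiff : (r : ℂ) - (starRingEnd ℂ) (I * r) * (I * r ^ 2) = ((r - r ^ 3 : ℝ) : ℂ) := by
    simp only [map_mul, Complex.conj_I, Complex.conj_ofReal]
    push_cast
    linear_combination (r : ℂ) ^ 3 * Complex.I_sq
  have hr3 : 0 ≤ r - r ^ 3 := by
    nlinarith [mul_nonneg (mul_nonneg hr0 (sub_nonneg.2 hr1)) (by linarith : (0 : ℝ) ≤ 1 + r)]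
  refine ⟨by simpa [abs_of_nonneg hr0] using hr1, ?_⟩
  simp only [hdiff, norm_mul, norm_pow, Complex.norm_I, Complex.norm_real, Real.norm_eq_abs,
    abs_of_nonneg hr0, abs_of_nonneg hr3, one_mul]
  -- the tetrablock defect is `(1 - r)³ (1 + r)`
  nlinarith [pow_nonneg (sub_nonneg.2 hr1) 3]

theorem hexablock_defining_expr_eq (r : ℝ) :
    1 - (r : ℂ) * (r : ℂ) - (I * r) * (-(I * r)) + (I * r ^ 2) * (r : ℂ) * (-(I * r)) =
      (((1 - r ^ 2) ^ 2 : ℝ) : ℂ) := by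
  push_cast
  linear_combination ((r : ℂ) ^ 2 - (r : ℂ) ^ 4) * Complex.I_sq

/-- The explicit example showing that the converse of Theorem 3.10 fails:
the point lies in the relevant biballs, tetrablock and pentablock, but not in
the closed hexablock. -/
theorem hexablock_counterexample (r : ℝ) (hr0 : 0 < r) (hr : r < 1 / 2)
    (a : ℝ) (ha : a = (3 * (1 - r ^ 2) + Real.sqrt (1 + r ^ 4)) / 4) :
    -- (i)
    (a ^ 2 + r ^ 2 < 1 ∧
      ((a : ℂ), (r : ℂ)) ∈ closedBiball ∧ ((a : ℂ), Complex.I * r) ∈ closedBiball) ∧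
    -- (ii)
    ((r : ℂ), Complex.I * r, Complex.I * r ^ 2) ∈ closedTetrablock ∧
    -- (iii)
    (a ≤ (Real.sqrt (1 + r ^ 4) + (1 - r ^ 2)) / 2 ∧
      ((a : ℂ), (r : ℂ) + Complex.I * r, Complex.I * r ^ 2) ∈ closedPentablock) ∧
    -- (iv)
    (1 - r ^ 2 < a ∧
      ‖1 - (r : ℂ) * (r : ℂ) - (Complex.I * r) * (-(Complex.I * r))
          + (Complex.I * r ^ 2) * (r : ℂ) * (-(Complex.I * r))‖ = (1 - r ^ 2) ^ 2 ∧
      (1 - r ^ 2) ^ 2 < a * Real.sqrt ((1 - r ^ 2) * (1 - r ^ 2)) ∧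
      ((a : ℂ), (r : ℂ), Complex.I * r, Complex.I * r ^ 2) ∉ closedHexablock) := by
  have hr2 : 0 < 1 - r ^ 2 := by nlinarith
  have hsqrt : 1 ≤ √(1 + r ^ 4) := Real.one_le_sqrt.2 (le_add_of_nonneg_right (by positivity))
  have ha1 : 1 - r ^ 2 < a := by rw [ha]; linarith [pow_pos hr0 2]
  have ha0 : 0 < a := hr2.trans ha1
  have hquad := sq_sub_le_of_eq_sqrt hr0 hr ha
  have hball := sq_add_sq_lt_one_of_sq_sub_le hr0.ne' hquad
  have hnorm : ‖1 - (r : ℂ) * (r : ℂ) - (I * r) * (-(I * r)) + (I * r ^ 2) * (r : ℂ) * (-(I * r))‖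
      = (1 - r ^ 2) ^ 2 := by
    rw [hexablock_defining_expr_eq, Complex.norm_real, Real.norm_of_nonneg (sq_nonneg _)]
  have hlt : (1 - r ^ 2) ^ 2 < a * √((1 - r ^ 2) * (1 - r ^ 2)) := by
    rw [Real.sqrt_mul_self hr2.le, sq]
    exact mul_lt_mul_of_pos_right ha1 hr2
  have hnorms : ‖(a : ℂ)‖ = a ∧ ‖(r : ℂ)‖ = r ∧ ‖I * r‖ = r := by
    simp [abs_of_pos ha0, abs_of_pos hr0]
  refine ⟨⟨hball, ?_, ?_⟩, mem_closedTetrablock_of_le_one hr0.le (by linarith),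
    ⟨by rw [ha]; linarith, pentablockWitness a r,
      norm_pentablockWitness_le_one ha0 hr0.ne' hquad, (pentablockWitness_coords ha0.ne').symm⟩,
    ha1, hnorm, hlt, fun hmem => ?_⟩
  · show ‖(a : ℂ)‖ ^ 2 + ‖(r : ℂ)‖ ^ 2 ≤ 1
    rw [hnorms.1, hnorms.2.1]; exact hball.le
  · show ‖(a : ℂ)‖ ^ 2 + ‖I * r‖ ^ 2 ≤ 1
    rw [hnorms.1, hnorms.2.2]; exact hball.le
  have hz : ‖(r : ℂ)‖ < 1 ∧ ‖-(I * r)‖ < 1 := by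
    rw [norm_neg, hnorms.2.1, hnorms.2.2]; constructor <;> linarith
  have := hmem.2 r (-(I * r)) hz.1 hz.2
  rw [norm_neg, hnorms.1, hnorms.2.1, hnorms.2.2] at this
  exact hlt.not_ge (this.trans_eq hnorm)

end
end

section
/- Let z₁, z₂ ∈ ℂ with |z₁| + |z₂| ≤ 1. Set α = √(1 − (|z₁| − |z₂|)²), β = √(1 − (|z₁| + |z₂|)²), f = (α + β)/2, and g = −(z₁·conj(z₂)/(2·|z₁·z₂|))·(α − β) if z₁·z₂ ≠ 0, while g = 0 if z₁·z₂ = 0. Then f² + |g|² = 1 − |z₁|² − |z₂|² and f·g + z₁·conj(z₂) = 0. -/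
/-! With `a = ‖z₁‖`, `b = ‖z₂‖` one has `α² + β² = 2 (1 - a² - b²)` and `α² - β² = 4ab`. Hence
`f² + ((α - β)/2)² = (α² + β²)/2 = 1 - a² - b²` and `f (α - β) = (α² - β²)/2 = 2ab`. Since `|g| = (α - β)/2`
and `z₁ conj z₂ / |z₁ z₂|` has modulus one, both identities follow; when `ab = 0` one has `α = β`
and `g = 0`. -/

open Complex

lemma Real.sq_sqrt_one_sub_sq {x : ℝ} (hx : |x| ≤ 1) : √(1 - x ^ 2) ^ 2 = 1 - x ^ 2 :=
  Real.sq_sqrt (sub_nonneg.2 ((sq_le_one_iff_abs_le_one x).2 hx))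

section

variable {z₁ z₂ : ℂ}

lemma norm_mul_conj_div_norm_mul (hz : z₁ * z₂ ≠ 0) :
    ‖z₁ * starRingEnd ℂ z₂ / ‖z₁ * z₂‖‖ = 1 := by
  rw [norm_div, norm_mul, norm_conj, norm_real, norm_norm, norm_mul,
    div_self (by simpa using hz)]

lemma norm_neg_mul_conj_div_two_norm_mul_mul (hz : z₁ * z₂ ≠ 0) (t : ℝ) :
    ‖-(z₁ * starRingEnd ℂ z₂ / (2 * ‖z₁ * z₂‖)) * t‖ = |t| / 2 := by
  rw [mul_comm (2 : ℂ), ← div_div, norm_mul, norm_neg, norm_div, norm_mul_conj_div_norm_mul hz,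
    norm_real, Real.norm_eq_abs, Complex.norm_two]
  ring

lemma mul_neg_mul_conj_div_two_norm_mul_mul (hz : z₁ * z₂ ≠ 0) {s t : ℝ}
    (hst : s * t = 2 * ‖z₁ * z₂‖) :
    (s : ℂ) * (-(z₁ * starRingEnd ℂ z₂ / (2 * ‖z₁ * z₂‖)) * t) = -(z₁ * starRingEnd ℂ z₂) := by
  have hst' : (s : ℂ) * t = 2 * ‖z₁ * z₂‖ := by exact_mod_cast hst
  have hnorm : (‖z₁ * z₂‖ : ℂ) ≠ 0 := by simpa using hz
  field_simp
  linear_combination -(z₁ * starRingEnd ℂ z₂) * hst'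

end

/-- The key scalar identities used in the construction of pure `ℍ`-isometries
(Theorem 5.10 of the paper): for `|z₁| + |z₂| ≤ 1`, with
`α = √(1 − (|z₁| − |z₂|)²)`, `β = √(1 − (|z₁| + |z₂|)²)`, `f = (α + β)/2` and
`g = −(z₁·conj z₂/(2|z₁z₂|))·(α − β)` (with `g = 0` when `z₁z₂ = 0`), one has
`f² + |g|² = 1 − |z₁|² − |z₂|²` and `f·g + z₁·conj z₂ = 0`. -/
theorem scalar_identities_for_pure_H_isometry
    (z₁ z₂ : ℂ) (h : ‖z₁‖ + ‖z₂‖ ≤ 1)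
    (α β f : ℝ) (g : ℂ)
    (hα : α = Real.sqrt (1 - (‖z₁‖ - ‖z₂‖) ^ 2))
    (hβ : β = Real.sqrt (1 - (‖z₁‖ + ‖z₂‖) ^ 2))
    (hf : f = (α + β) / 2)
    (hg₁ : z₁ * z₂ ≠ 0 →
      g = -(z₁ * (starRingEnd ℂ) z₂ / (2 * (‖z₁ * z₂‖ : ℂ))) * ((α : ℂ) - (β : ℂ)))
    (hg₂ : z₁ * z₂ = 0 → g = 0) :
    f ^ 2 + ‖g‖ ^ 2 = 1 - ‖z₁‖ ^ 2 - ‖z₂‖ ^ 2 ∧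
      (f : ℂ) * g + z₁ * (starRingEnd ℂ) z₂ = 0 := by
  have ha := norm_nonneg z₁
  have hb := norm_nonneg z₂
  have hα2 : α ^ 2 = 1 - (‖z₁‖ - ‖z₂‖) ^ 2 := hα ▸ Real.sq_sqrt_one_sub_sq (by grind)
  have hβ2 : β ^ 2 = 1 - (‖z₁‖ + ‖z₂‖) ^ 2 := hβ ▸ Real.sq_sqrt_one_sub_sq (by grind)
  have hsum : f ^ 2 + ((α - β) / 2) ^ 2 = 1 - ‖z₁‖ ^ 2 - ‖z₂‖ ^ 2 := by
    rw [hf]; linear_combination (hα2 + hβ2) / 2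
  have hprod : f * (α - β) = 2 * ‖z₁ * z₂‖ := by
    rw [hf, norm_mul]; linear_combination (hα2 - hβ2) / 2
  rcases eq_or_ne (z₁ * z₂) 0 with hz | hz
  · have hαβ : α = β := by
      have hab : ‖z₁‖ * ‖z₂‖ = 0 := by rw [← norm_mul, hz, norm_zero]
      rw [hα, hβ]; congr 1; linear_combination 4 * hab
    rw [hg₂ hz]
    refine ⟨by simpa [hαβ] using hsum, ?_⟩
    rcases mul_eq_zero.1 hz with h0 | h0 <;> simp [h0]
  · have hβα : β ≤ α := by
      rw [hα, hβ]; exact Real.sqrt_le_sqrt (by nlinarith)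
    rw [hg₁ hz, ← ofReal_sub]
    refine ⟨?_, by rw [mul_neg_mul_conj_div_two_norm_mul_mul hz hprod, neg_add_cancel]⟩
    rw [norm_neg_mul_conj_div_two_norm_mul_mul hz, abs_of_nonneg (sub_nonneg.2 hβα), hsum]
end

section
/- Let V₀, V₁, V₂, V₃ be pairwise commuting bounded operators on a complex Hilbert space such that V₃ is an isometry (V₃*·V₃ = I), V₁ = V₂*·V₃ and ‖V₂‖ ≤ 1 (i.e. (V₁,V₂,V₃) is an 𝔼-isometry). Then V₁*·V₁ = V₂*·V₂; consequently V₀*·V₀ + V₁*·V₁ = I holds if and only if V₀*·V₀ + V₂*·V₂ = I. -/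
/-- If `(V₁, V₂, V₃)` is an `𝔼`-isometry (i.e. `V₃` is an isometry,
`V₁ = V₂*V₃` and `‖V₂‖ ≤ 1`) commuting with `V₀`, then `V₁*V₁ = V₂*V₂`;
consequently `V₀*V₀ + V₁*V₁ = I` iff `V₀*V₀ + V₂*V₂ = I`. -/
theorem E_isometry_defect_eq {H : Type*} [NormedAddCommGroup H]
    [InnerProductSpace ℂ H] [CompleteSpace H]
    (V₀ V₁ V₂ V₃ : H →L[ℂ] H)
    (hc01 : Commute V₀ V₁) (hc02 : Commute V₀ V₂) (hc03 : Commute V₀ V₃)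
    (hc12 : Commute V₁ V₂) (hc13 : Commute V₁ V₃) (hc23 : Commute V₂ V₃)
    (hiso : star V₃ * V₃ = 1) (h₁ : V₁ = star V₂ * V₃) (h₂ : ‖V₂‖ ≤ 1) :
    star V₁ * V₁ = star V₂ * V₂ ∧
      (star V₀ * V₀ + star V₁ * V₁ = 1 ↔ star V₀ * V₀ + star V₂ * V₂ = 1) := by
  have hV2 : star V₁ * V₃ = V₂ := by
    rw [h₁, star_mul, star_star, mul_assoc, hc23.eq, ← mul_assoc, hiso, one_mul]
  have key : star V₁ * V₁ = star V₂ * V₂ := by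
    nth_rewrite 2 [← hV2]
    rw [← mul_assoc, ← star_mul, hc12.eq, star_mul, mul_assoc, ← h₁]
  exact ⟨key, by rw [key]⟩
end

section
/- Let N₀, N₁, N₂, N₃ be pairwise commuting bounded operators on a complex Hilbert space. Then N₀, N₁, N₂, N₃ are all normal with N₃ unitary, N₁ = N₂*·N₃, ‖N₂‖ ≤ 1 and N₀*·N₀ + N₁*·N₁ = I (i.e. (N₀,N₁,N₂,N₃) is an ℍ-unitary) if and only if both quadruples (N₀,N₁,N₂,N₃) and (N₀*,N₁*,N₂*,N₃*) are ℍ-isometries, i.e. N₃*·N₃ = I, N₁ = N₂*·N₃, ‖N₂‖ ≤ 1, N₀*·N₀ + N₁*·N₁ = I, and also N₃·N₃* = I, N₁* = N₂·N₃*, and N₀·N₀* + N₁·N₁* = I. -/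
/-- If `b` has a two-sided inverse `bi` and `a` commutes with `b`,
then `a` commutes with `bi`. -/
lemma aux_comm_inv {R : Type*} [Monoid R] {a b bi : R}
    (h1 : bi * b = 1) (h5 : b * bi = 1) (h : Commute a b) : Commute a bi := by
  have : a * bi = bi * (b * a) * bi := by
    rw [← mul_assoc, h1, one_mul]
  rw [Commute, SemiconjBy, this, ← h.eq, mul_assoc, mul_assoc, h5, mul_one]

/-- A commuting quadruple is an `ℍ`-unitary if and only if both the quadruple
and its adjoint quadruple are `ℍ`-isometries. -/
theorem H_unitary_iff_both_H_isometries {H : Type*} [NormedAddCommGroup H]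
    [InnerProductSpace ℂ H] [CompleteSpace H]
    (N₀ N₁ N₂ N₃ : H →L[ℂ] H)
    (hc01 : Commute N₀ N₁) (hc02 : Commute N₀ N₂) (hc03 : Commute N₀ N₃)
    (hc12 : Commute N₁ N₂) (hc13 : Commute N₁ N₃) (hc23 : Commute N₂ N₃) :
    (IsStarNormal N₀ ∧ IsStarNormal N₁ ∧ IsStarNormal N₂ ∧ IsStarNormal N₃ ∧
      star N₃ * N₃ = 1 ∧ N₃ * star N₃ = 1 ∧ N₁ = star N₂ * N₃ ∧ ‖N₂‖ ≤ 1 ∧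
      star N₀ * N₀ + star N₁ * N₁ = 1) ↔
    ((star N₃ * N₃ = 1 ∧ N₁ = star N₂ * N₃ ∧ ‖N₂‖ ≤ 1 ∧
        star N₀ * N₀ + star N₁ * N₁ = 1) ∧
      (N₃ * star N₃ = 1 ∧ star N₁ = N₂ * star N₃ ∧
        N₀ * star N₀ + N₁ * star N₁ = 1)) := by
  constructor
  · rintro ⟨hn0, hn1, hn2, hn3, h1, h5, h2, h3, h4⟩
    have a1 : Commute N₂ (star N₃) := aux_comm_inv h1 h5 hc23
    refine ⟨⟨h1, h2, h3, h4⟩, h5, ?_, ?_⟩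
    · rw [h2, star_mul, star_star, ← a1.eq]
    · rw [← hn0.star_comm_self.eq, ← hn1.star_comm_self.eq]
      exact h4
  · rintro ⟨⟨h1, h2, h3, h4⟩, h5, h6, h7⟩
    -- basic commutation relations
    have a1 : Commute N₂ (star N₃) := aux_comm_inv h1 h5 hc23
    have a2 : Commute (star N₂) N₃ := by
      have := congrArg star a1.eq
      simp only [star_mul, star_star] at this
      exact this.symm
    have c3s : Commute N₀ (star N₃) := aux_comm_inv h1 h5 hc03
    have c02s : Commute N₀ (star N₂) := by
      have h01 : Commute N₀ (star N₂ * N₃) := h2 ▸ hc01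
      have : Commute N₀ ((star N₂ * N₃) * star N₃) := h01.mul_right c3s
      rwa [mul_assoc, h5, mul_one] at this
    have c0s2 : Commute (star N₀) N₂ := by
      have := congrArg star c02s.eq
      simp only [star_mul, star_star] at this
      exact this.symm
    -- key identities: star N₁ * N₁ = N₂ * star N₂ and N₁ * star N₁ = star N₂ * N₂
    have k1 : star N₁ * N₁ = N₂ * star N₂ := by
      rw [h2, star_mul, star_star]
      calc star N₃ * N₂ * (star N₂ * N₃)
          = N₂ * star N₃ * (star N₂ * N₃) := by rw [← a1.eq]
        _ = N₂ * (star N₃ * star N₂) * N₃ := by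
            simp only [mul_assoc]
        _ = N₂ * (star N₂ * star N₃) * N₃ := by
            have := congrArg star hc23.eq
            simp only [star_mul] at this
            rw [this]
        _ = N₂ * star N₂ * (star N₃ * N₃) := by simp only [mul_assoc]
        _ = N₂ * star N₂ := by rw [h1, mul_one]
    have k2 : N₁ * star N₁ = star N₂ * N₂ := by
      rw [h2, star_mul, star_star]
      calc star N₂ * N₃ * (star N₃ * N₂)
          = star N₂ * (N₃ * star N₃) * N₂ := by simp only [mul_assoc]
        _ = star N₂ * N₂ := by rw [h5, mul_one]
    have e1 : star N₀ * N₀ + N₂ * star N₂ = 1 := by rw [← k1]; exact h4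
    have e2 : N₀ * star N₀ + star N₂ * N₂ = 1 := by rw [← k2]; exact h7
    have p1 : star N₀ * N₀ = 1 - N₂ * star N₂ := eq_sub_of_add_eq e1
    have p2 : N₀ * star N₀ = 1 - star N₂ * N₂ := eq_sub_of_add_eq e2
    -- quasinormality-type commutations
    have q0 : Commute N₀ (star N₀ * N₀) := by
      rw [p1]; exact Commute.one_right N₀ |>.sub_right (hc02.mul_right c02s)
    have q0' : Commute N₀ (N₀ * star N₀) := by
      rw [p2]; exact Commute.one_right N₀ |>.sub_right (c02s.mul_right hc02)
    have p1' : N₂ * star N₂ = 1 - star N₀ * N₀ :=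
      eq_sub_of_add_eq (by rw [add_comm]; exact e1)
    have p2' : star N₂ * N₂ = 1 - N₀ * star N₀ :=
      eq_sub_of_add_eq (by rw [add_comm]; exact e2)
    have q2 : Commute N₂ (star N₂ * N₂) := by
      rw [p2']; exact Commute.one_right N₂ |>.sub_right
        (hc02.symm.mul_right c0s2.symm)
    have q2' : Commute N₂ (N₂ * star N₂) := by
      rw [p1']; exact Commute.one_right N₂ |>.sub_right
        (c0s2.symm.mul_right hc02.symm)
    -- the self-commutator D
    set D := star N₀ * N₀ - N₀ * star N₀ with hDdef
    have hDalt : D = star N₂ * N₂ - N₂ * star N₂ := by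
      rw [hDdef, p1, p2]; abel
    have hstarD : star D = D := by
      rw [hDdef]
      simp only [star_sub, star_mul, star_star]
    have hD0 : D * N₀ = 0 := by
      rw [hDdef, sub_mul, sub_eq_zero, ← q0.eq, ← mul_assoc]
    have hD2 : D * N₂ = 0 := by
      rw [hDalt, sub_mul, sub_eq_zero, ← q2.eq, ← mul_assoc]
    have h0D : N₀ * D = 0 := by
      have : N₀ * D = D * N₀ := by
        rw [hDdef, mul_sub, sub_mul, q0.eq, q0'.eq]
      rw [this, hD0]
    have h2D : N₂ * D = 0 := by
      have : N₂ * D = D * N₂ := by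
        rw [hDalt, mul_sub, sub_mul, q2.eq, q2'.eq]
      rw [this, hD2]
    have hD0s : D * star N₀ = 0 := by
      have : D * star N₀ = star (N₀ * D) := by rw [star_mul, hstarD]
      rw [this, h0D, star_zero]
    have hD2s : D * star N₂ = 0 := by
      have : D * star N₂ = star (N₂ * D) := by rw [star_mul, hstarD]
      rw [this, h2D, star_zero]
    -- D² = D and D² = -D, hence D = 0
    have sq1 : D * D = D := by
      have hform : D = 1 - N₂ * star N₂ - N₀ * star N₀ := by rw [hDdef, p1]
      calc D * D = D * (1 - N₂ * star N₂ - N₀ * star N₀) := by rw [← hform]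
        _ = D - (D * N₂) * star N₂ - (D * N₀) * star N₀ := by
            simp only [mul_sub, mul_one, mul_assoc]
        _ = D := by rw [hD2, hD0, zero_mul, zero_mul, sub_zero, sub_zero]
    have sq2 : D * D = -D := by
      have hform : D = star N₀ * N₀ + star N₂ * N₂ - 1 := by
        rw [hDdef, p2]; abel
      calc D * D = D * (star N₀ * N₀ + star N₂ * N₂ - 1) := by rw [← hform]
        _ = (D * star N₀) * N₀ + (D * star N₂) * N₂ - D := by
            simp only [mul_sub, mul_add, mul_one, mul_assoc]
        _ = -D := by
            rw [hD0s, hD2s, zero_mul, zero_mul, add_zero, zero_sub]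
    have hDzero : D = 0 := by
      have hneg : D = -D := sq1.symm.trans sq2
      have hDD : (2 : ℂ) • D = 0 := by
        rw [two_smul]
        nth_rewrite 1 [hneg]
        exact neg_add_cancel D
      exact (smul_eq_zero.mp hDD).resolve_left two_ne_zero
    have n0 : star N₀ * N₀ = N₀ * star N₀ := by
      have := hDzero
      rw [hDdef, sub_eq_zero] at this
      exact this
    have n2 : star N₂ * N₂ = N₂ * star N₂ := by
      have := hDalt ▸ hDzero
      rwa [sub_eq_zero] at this
    have n1 : star N₁ * N₁ = N₁ * star N₁ := by rw [k1, k2, n2]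
    have n3 : star N₃ * N₃ = N₃ * star N₃ := h1.trans h5.symm
    exact ⟨⟨n0⟩, ⟨n1⟩, ⟨n2⟩, ⟨n3⟩, h1, h5, h2, h3, h4⟩
end

section
/- Let N₁, N₂, N₃ be pairwise commuting bounded normal operators on a complex Hilbert space H with N₃ unitary, N₁ = N₂*·N₃ and ‖N₁‖ ≤ 1 (an 𝔼-unitary), and let D_{N₁} = (I − N₁*·N₁)^{1/2}. Then D_{N₁} commutes with N₁, N₂ and N₃, and the quadruple (D_{N₁}, N₁, N₂, N₃) is an ℍ-unitary: its four entries are pairwise commuting normal operators with N₃ unitary, N₁ = N₂*·N₃, ‖N₁‖ ≤ 1 and (D_{N₁})*·D_{N₁} + N₁*·N₁ = I. Conversely, if (D_{N₁}, N₁, N₂, N₃) is an ℍ-unitary then (N₁, N₂, N₃) is an 𝔼-unitary. -/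
/-!
A positive operator `D` is the continuous functional calculus `√(D * D)` of its square, so it
commutes with every operator commuting with `D * D = 1 - N₁* N₁`, i.e. with every operator
commuting with both `N₁` and `N₁*`. For an `𝔼`-unitary, `N₁* = N₃* N₂`, and `N₂`, `N₃` commute
with it because they commute with each other and `N₃* = N₃⁻¹`.
-/

theorem Commute.star_right_of_mem_unitary {R : Type*} [Monoid R] [StarMul R] {a u : R}
    (hu : u ∈ unitary R) (h : Commute a u) : Commute a (star u) := by
  have h' : Commute a (Unitary.toUnits ⟨u, hu⟩ : Rˣ) := h
  simpa [← Unitary.star_eq_inv] using h'.units_inv_right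

theorem Commute.of_mul_self_left_of_nonneg {A : Type*} [CStarAlgebra A] [PartialOrder A]
    [StarOrderedRing A] {d b : A} (hd : 0 ≤ d) (h : Commute (d * d) b) : Commute d b := by
  have hd_eq : d = cfc NNReal.sqrt (d * d) := by rw [← CFC.sqrt_eq_cfc, CFC.sqrt_mul_self d]
  rw [hd_eq]
  exact h.cfc_nnreal _

theorem Commute.of_mul_self_eq_one_sub_star_mul_self {A : Type*} [CStarAlgebra A]
    [PartialOrder A] [StarOrderedRing A] {a b d : A} (hd : 0 ≤ d)
    (hdd : d * d = 1 - star a * a) (ha : Commute a b) (ha' : Commute (star a) b) :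
    Commute d b :=
  .of_mul_self_left_of_nonneg hd <| hdd ▸ (Commute.one_left b).sub_left (ha'.mul_left ha)

/-- `(N₁, N₂, N₃)` is an `𝔼`-unitary if and only if `D_{N₁}` (the positive
square root of `I − N₁*N₁`) commutes with `N₁, N₂, N₃` and the quadruple
`(D_{N₁}, N₁, N₂, N₃)` is an `ℍ`-unitary. -/
theorem E_unitary_iff_defect_H_unitary
    {H : Type*} [NormedAddCommGroup H] [InnerProductSpace ℂ H] [CompleteSpace H]
    (N₁ N₂ N₃ D : H →L[ℂ] H)
    (hc12 : Commute N₁ N₂) (hc13 : Commute N₁ N₃) (hc23 : Commute N₂ N₃)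
    (hDpos : D.IsPositive) (hDsq : D * D = 1 - star N₁ * N₁) :
    (IsStarNormal N₁ ∧ IsStarNormal N₂ ∧ IsStarNormal N₃ ∧
      star N₃ * N₃ = 1 ∧ N₃ * star N₃ = 1 ∧ N₁ = star N₂ * N₃ ∧ ‖N₁‖ ≤ 1) ↔
    (Commute D N₁ ∧ Commute D N₂ ∧ Commute D N₃ ∧
      IsStarNormal D ∧ IsStarNormal N₁ ∧ IsStarNormal N₂ ∧ IsStarNormal N₃ ∧
      star N₃ * N₃ = 1 ∧ N₃ * star N₃ = 1 ∧ N₁ = star N₂ * N₃ ∧ ‖N₁‖ ≤ 1 ∧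
      star D * D + star N₁ * N₁ = 1) := by
  refine ⟨fun ⟨hn₁, hn₂, hn₃, hu₁, hu₂, heq, hnorm⟩ => ?_,
    fun ⟨_, _, _, _, h₁, h₂, h₃, h₄, h₅, h₆, h₇, _⟩ => ⟨h₁, h₂, h₃, h₄, h₅, h₆, h₇⟩⟩
  have hu : N₃ ∈ unitary (H →L[ℂ] H) := ⟨hu₁, hu₂⟩
  have hD : 0 ≤ D := (ContinuousLinearMap.nonneg_iff_isPositive D).mpr hDpos
  have hstar : star N₁ = star N₃ * N₂ := by rw [heq, star_mul, star_star]
  have hD_commute {b : H →L[ℂ] H} (hb : Commute N₁ b) (hb' : Commute (star N₁) b) :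
      Commute D b :=
    .of_mul_self_eq_one_sub_star_mul_self hD hDsq hb hb'
  have hc2 : Commute (star N₁) N₂ :=
    hstar ▸ ((hc23.star_right_of_mem_unitary hu).symm.mul_left (.refl N₂))
  have hc3 : Commute (star N₁) N₃ :=
    hstar ▸ ((commute_unitary_star_self hu).mul_left hc23)
  refine ⟨hD_commute (.refl N₁) hn₁.star_comm_self, hD_commute hc12 hc2, hD_commute hc13 hc3,
    hDpos.isSelfAdjoint.isStarNormal, hn₁, hn₂, hn₃, hu₁, hu₂, heq, hnorm, ?_⟩
  rw [hDpos.isSelfAdjoint.star_eq, hDsq, sub_add_cancel]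
end
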